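/- Let b ≥ 2 be a natural number and set r = 1 − 1/b². For any w₀ > 0, if b is chosen large enough that 1 − exp(−w₀) < 1 − 1/b², then any sequence (wₙ) of nonnegative reals with w_{n+1} ≤ ((1 − exp(−wₙ))/r)·wₙ converges to 0. -/

import Mathlib

/-! Since `x ↦ (1 - exp (-x)) / r` is increasing, as long as the sequence stays below `w 0` its
contraction factor is at most `q = (1 - exp (-w 0)) / r`, and `q < 1` is exactly the largeness
assumption on `b`. Hence the sequence never leaves `[0, w 0]`, is dominated by the geometric
sequence `q ^ n * w 0`, and tends to `0`. -/

open Filter Topology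

theorem tendsto_zero_of_le_mul_of_lt_one {w : ℕ → ℝ} {q : ℝ} (hnn : ∀ n, 0 ≤ w n)
    (hq0 : 0 ≤ q) (hq1 : q < 1) (h : ∀ n, w (n + 1) ≤ q * w n) :
    Tendsto w atTop (𝓝 0) := by
  have hgeom : Tendsto (fun n ↦ q ^ n * w 0) atTop (𝓝 0) := by
    simpa using (tendsto_pow_atTop_nhds_zero_of_lt_one hq0 hq1).mul_const (w 0)
  exact squeeze_zero hnn (fun n ↦ le_geom hq0 n fun k _ ↦ h k) hgeom

section MonotoneFactor

variable {f : ℝ → ℝ} {w : ℕ → ℝ}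

theorem le_initial_of_le_mul_of_monotone (hf : Monotone f) (hnn : ∀ n, 0 ≤ w n)
    (hq1 : f (w 0) ≤ 1) (hrec : ∀ n, w (n + 1) ≤ f (w n) * w n) (n : ℕ) : w n ≤ w 0 := by
  induction n with
  | zero => rfl
  | succ n ih =>
    calc w (n + 1) ≤ f (w n) * w n := hrec n
      _ ≤ f (w 0) * w n := mul_le_mul_of_nonneg_right (hf ih) (hnn n)
      _ ≤ w n := mul_le_of_le_one_left (hnn n) hq1
      _ ≤ w 0 := ih

theorem le_initial_mul_of_le_mul_of_monotone (hf : Monotone f) (hnn : ∀ n, 0 ≤ w n)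
    (hq1 : f (w 0) ≤ 1) (hrec : ∀ n, w (n + 1) ≤ f (w n) * w n) (n : ℕ) :
    w (n + 1) ≤ f (w 0) * w n :=
  (hrec n).trans <| mul_le_mul_of_nonneg_right
    (hf (le_initial_of_le_mul_of_monotone hf hnn hq1 hrec n)) (hnn n)

end MonotoneFactor

theorem stmt_4_general (b : ℕ) (r : ℝ) (hr : r = 1 - 1 / (b : ℝ) ^ 2)
    (w : ℕ → ℝ) (hnn : ∀ n, 0 ≤ w n)
    (hlarge : 1 - Real.exp (-(w 0)) < 1 - 1 / (b : ℝ) ^ 2)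
    (hrec : ∀ n, w (n + 1) ≤ ((1 - Real.exp (-(w n))) / r) * w n) :
    Filter.Tendsto w Filter.atTop (nhds 0) := by
  rw [← hr] at hlarge
  have hnum : 0 ≤ 1 - Real.exp (-(w 0)) :=
    sub_nonneg.mpr (Real.exp_le_one_iff.mpr (neg_nonpos.mpr (hnn 0)))
  have hr0 : 0 < r := hnum.trans_lt hlarge
  have hf : Monotone fun x ↦ (1 - Real.exp (-x)) / r := fun x y hxy ↦ by
    dsimp only
    gcongr
  have hq1 : (1 - Real.exp (-(w 0))) / r < 1 := (div_lt_one hr0).mpr hlarge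
  exact tendsto_zero_of_le_mul_of_lt_one hnn (div_nonneg hnum hr0.le) hq1
    (le_initial_mul_of_le_mul_of_monotone hf hnn hq1.le hrec)

theorem stmt_4 (b : ℕ) (hb : 2 ≤ b) (r : ℝ) (hr : r = 1 - 1 / (b : ℝ) ^ 2)
    (w : ℕ → ℝ) (hnn : ∀ n, 0 ≤ w n) (hw0 : 0 < w 0)
    (hlarge : 1 - Real.exp (-(w 0)) < 1 - 1 / (b : ℝ) ^ 2)
    (hrec : ∀ n, w (n + 1) ≤ ((1 - Real.exp (-(w n))) / r) * w n) :
    Filter.Tendsto w Filter.atTop (nhds 0) :=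
  stmt_4_general b r hr w hnn hlarge hrec
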